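/- arXiv:1104.2699 — 3 statements merged into one kernel-verified Lean document; each statement's English description precedes it below -/
import Mathlib

section
/- q-Cassini formula: F_{n-1}(x,qs,q) F_{n+1}(x,s,q) - F_n(x,s,q) F_n(x,qs,q) = (-1)^n q^{n(n-1)/2} s^{n-1} for n ≥ 1. -/
/-! Induction on `n`, for all `s` at once. Expanding `F_{n+3}(s)` and `F_{n+2}(s)` by the
recursion, the `x`-terms cancel and what is left is `-q s` times the Cassini expression
of index `n` at the argument `q s`. -/

def carlitzFib {R : Type*} [CommRing R] (x q : R) : ℕ → R → R
  | 0, _ => 0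
  | 1, _ => 1
  | n + 2, s => x * carlitzFib x q (n + 1) (q * s) + q * s * carlitzFib x q n (q ^ 2 * s)

namespace carlitzFib

variable {R : Type*} [CommRing R] (x q : R)

theorem add_two (n : ℕ) (s : R) :
    carlitzFib x q (n + 2) s =
      x * carlitzFib x q (n + 1) (q * s) + q * s * carlitzFib x q n (q ^ 2 * s) :=
  rfl

theorem cassini_add_one (n : ℕ) (s : R) :
    carlitzFib x q n (q * s) * carlitzFib x q (n + 2) s -
      carlitzFib x q (n + 1) s * carlitzFib x q (n + 1) (q * s) =
      (-1) ^ (n + 1) * q ^ ((n + 1) * n / 2) * s ^ n := by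
  induction n generalizing s with
  | zero => simp [carlitzFib]
  | succ n ih =>
    have ih_qs := ih (q * s)
    rw [← mul_assoc, ← sq] at ih_qs
    have hexp : (n + 2) * (n + 1) / 2 = (n + 1) * n / 2 + (n + 1) := Nat.triangle_succ (n + 1)
    rw [add_two x q (n + 1) s, add_two x q n s, hexp]
    linear_combination (-(q * s)) * ih_qs

end carlitzFib

theorem q_cassini {R : Type*} [CommRing R] (x q s : R) (n : ℕ) (hn : 1 ≤ n) :
    carlitzFib x q (n - 1) (q * s) * carlitzFib x q (n + 1) s -
      carlitzFib x q n s * carlitzFib x q n (q * s) =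
      (-1) ^ n * q ^ (n * (n - 1) / 2) * s ^ (n - 1) := by
  obtain ⟨k, rfl⟩ : ∃ k, n = k + 1 := Nat.exists_eq_add_of_le' hn
  simpa using carlitzFib.cassini_add_one x q k s
end

section
/- The addition formula F_{m+n}(x,s,q) = q^n s F_{m-1}(x,q^{n+1}s,q) F_n(x,s,q) + F_m(x,q^n s,q) F_{n+1}(x,s,q) holds for all m ≥ 1, n ≥ 0. -/
/-!
Besides its defining recurrence, which shifts the parameter `s ↦ q s`, the Carlitz
`q`-Fibonacci sequence satisfies a recurrence at a fixed parameter,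
`F_{n+2}(s) = x F_{n+1}(s) + q^n s F_n(s)`. The addition formula follows by induction on `n`:
raising `m` by one, expand `F_{m+1}(q^n s)` by the defining recurrence and `F_{n+2}(s)` by the
fixed-parameter one.
-/

namespace carlitzFib

variable {R : Type*} [CommRing R] (x q : R)

theorem zero (s : R) : carlitzFib x q 0 s = 0 := rfl

theorem one (s : R) : carlitzFib x q 1 s = 1 := rfl

theorem add_two_of_fixed_param : ∀ (n : ℕ) (s : R),
    carlitzFib x q (n + 2) s = x * carlitzFib x q (n + 1) s + q ^ n * s * carlitzFib x q n s
  | 0, s => by simp [add_two, zero, one]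
  | 1, s => by simp [add_two, zero, one]
  | n + 2, s => by
    have h₁ : carlitzFib x q (n + 3) (q * s) =
        x * carlitzFib x q (n + 2) (q * s) + q ^ (n + 1) * (q * s) * carlitzFib x q (n + 1) (q * s) :=
      add_two_of_fixed_param (n + 1) (q * s)
    have h₂ := add_two_of_fixed_param n (q ^ 2 * s)
    have hs : carlitzFib x q (n + 3) s =
        x * carlitzFib x q (n + 2) (q * s) + q * s * carlitzFib x q (n + 1) (q ^ 2 * s) :=
      add_two x q (n + 1) s
    rw [add_two x q (n + 2) s, hs, add_two x q n s]
    linear_combination x * h₁ + q * s * h₂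

theorem succ_add (k n : ℕ) (s : R) :
    carlitzFib x q (k + 1 + n) s =
      q ^ n * s * carlitzFib x q k (q ^ (n + 1) * s) * carlitzFib x q n s +
        carlitzFib x q (k + 1) (q ^ n * s) * carlitzFib x q (n + 1) s := by
  induction n generalizing k with
  | zero => simp [zero, one]
  | succ n ih =>
    have hk : carlitzFib x q (k + 2) (q ^ n * s) =
        x * carlitzFib x q (k + 1) (q ^ (n + 1) * s) +
          q ^ (n + 1) * s * carlitzFib x q k (q ^ (n + 2) * s) := by
      rw [add_two, ← mul_assoc, ← pow_succ', ← mul_assoc, ← pow_add, add_comm 2 n, mul_assoc]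
    rw [show k + 1 + (n + 1) = k + 2 + n by omega, ih (k + 1), hk,
      add_two_of_fixed_param x q n s]
    ring

end carlitzFib

theorem q_fib_add {R : Type*} [CommRing R] (x q s : R) (m n : ℕ) (hm : 1 ≤ m) :
    carlitzFib x q (m + n) s =
      q ^ n * s * carlitzFib x q (m - 1) (q ^ (n + 1) * s) * carlitzFib x q n s +
        carlitzFib x q m (q ^ n * s) * carlitzFib x q (n + 1) s := by
  obtain ⟨k, rfl⟩ := Nat.exists_eq_add_of_le' hm
  simpa using carlitzFib.succ_add x q k n s
end

section
/- The q-Lucas polynomial identity x L_n(x,qs,q) = F_{n+2}(x,s,q) - q^{n+1} s² F_{n-2}(x,q²s,q) holds for n ≥ 2, where L_n(x,s,q) = F_{n+1}(x,s,q) + s F_{n-1}(x,qs,q). -/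
def qLucas {R : Type*} [CommRing R] (x q : R) (n : ℕ) (s : R) : R :=
  carlitzFib x q (n + 1) s + s * carlitzFib x q (n - 1) (q * s)

/-! Besides the defining recurrence, which shifts `s`, the Carlitz polynomials satisfy a
recurrence at fixed `s`: `F (m + 2) s = x * F (m + 1) s + q ^ m * s * F m s`. Expanding
`F (n + 2) s` once by the defining recurrence and then its term `F n (q ^ 2 * s)` by the
fixed-`s` one produces exactly `x * L n (q * s)` plus the correction `q ^ (n + 1) * s ^ 2 * F (n - 2) (q ^ 2 * s)`. -/

section

variable {R : Type*} [CommRing R] (x q : R)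

theorem carlitzFib_add_two (m : ℕ) (s : R) :
    carlitzFib x q (m + 2) s =
      x * carlitzFib x q (m + 1) (q * s) + q * s * carlitzFib x q m (q ^ 2 * s) :=
  rfl

theorem carlitzFib_add_two_same_arg :
    ∀ (m : ℕ) (s : R),
      carlitzFib x q (m + 2) s = x * carlitzFib x q (m + 1) s + q ^ m * s * carlitzFib x q m s
  | 0, s => by simp [carlitzFib]
  | 1, s => by simp [carlitzFib]
  | m + 2, s => by
    rw [carlitzFib_add_two, carlitzFib_add_two_same_arg (m + 1) (q * s),
      carlitzFib_add_two_same_arg m (q ^ 2 * s), carlitzFib_add_two x q (m + 1) s,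
      carlitzFib_add_two x q m s]
    ring

end

theorem q_lucas_identity {R : Type*} [CommRing R] (x q s : R) (n : ℕ) (hn : 2 ≤ n) :
    x * qLucas x q n (q * s) =
      carlitzFib x q (n + 2) s - q ^ (n + 1) * s ^ 2 * carlitzFib x q (n - 2) (q ^ 2 * s) := by
  obtain ⟨k, rfl⟩ := Nat.exists_eq_add_of_le' hn
  rw [qLucas, show k + 2 - 1 = k + 1 by omega, Nat.add_sub_cancel,
    show q * (q * s) = q ^ 2 * s by ring, carlitzFib_add_two x q (k + 2) s,
    carlitzFib_add_two_same_arg x q k (q ^ 2 * s)]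
  ring
end
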